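/- Let W^NR be the set of women whose individual push-up by man m causes no regret. Then for any subset Y ⊆ W^NR, pushing up the entire set Y simultaneously also causes no regret for m: the resulting DA matching still assigns μ(m) to m. -/

import Mathlib

/-- A stable marriage profile: `M m` is man `m`'s ranking of women
(`M m k` = his `k`-th favorite woman), `W w` is woman `w`'s ranking of men. -/
structure Profile (n : ℕ) where
  M : Fin n → (Fin n ≃ Fin n)
  W : Fin n → (Fin n ≃ Fin n)

/-- Man `m` strictly prefers woman `w₁` to woman `w₂`. -/
def Profile.mpref {n : ℕ} (P : Profile n) (m w₁ w₂ : Fin n) : Prop :=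
  (P.M m).symm w₁ < (P.M m).symm w₂

/-- Woman `w` strictly prefers man `m₁` to man `m₂`. -/
def Profile.wpref {n : ℕ} (P : Profile n) (w m₁ m₂ : Fin n) : Prop :=
  (P.W w).symm m₁ < (P.W w).symm m₂

/-- State of the Gale–Shapley (deferred acceptance) algorithm:
`next m` is the rank of the next woman `m` will propose to, `wmatch w` is the man
currently (tentatively) held by woman `w`, `props` records all proposals made so far. -/
structure GSState (n : ℕ) where
  next : Fin n → ℕ
  wmatch : Fin n → Option (Fin n)
  props : List (Fin n × Fin n)

/-- Man `m` is currently not held by any woman. -/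
def isUnmatched {n : ℕ} (s : GSState n) (m : Fin n) : Bool :=
  decide (∀ w, s.wmatch w ≠ some m)

/-- One step of men-proposing deferred acceptance: the first unmatched man
proposes to the next woman on his list; she keeps her favorite proposer so far. -/
def GSstep {n : ℕ} (P : Profile n) (s : GSState n) : GSState n :=
  match (List.finRange n).find? (fun m => isUnmatched s m && decide (s.next m < n)) with
  | none => s
  | some m =>
    if h : s.next m < n then
      let w := P.M m ⟨s.next m, h⟩
      let s' : GSState n :=
        { next := Function.update s.next m (s.next m + 1),
          wmatch := s.wmatch,
          props := (m, w) :: s.props }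
      match s.wmatch w with
      | none => { s' with wmatch := Function.update s.wmatch w (some m) }
      | some m' =>
          if (P.W w).symm m < (P.W w).symm m' then
            { s' with wmatch := Function.update s.wmatch w (some m) }
          else s'
    else s

def GSinit (n : ℕ) : GSState n := ⟨fun _ => 0, fun _ => none, []⟩

/-- Run deferred acceptance to completion (at most `n*n` proposals occur). -/
def GSrun {n : ℕ} (P : Profile n) : GSState n := (GSstep P)^[n * n + 1] (GSinit n)

/-- The men-proposing deferred acceptance matching, as a map from men to women. -/
noncomputable def DA {n : ℕ} (P : Profile n) : Fin n → Fin n :=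
  fun m => if h : ∃ w, (GSrun P).wmatch w = some m then h.choose else m

/-- Man `m` proposes to woman `w` during the run of deferred acceptance on `P`. -/
def Proposes {n : ℕ} (P : Profile n) (m w : Fin n) : Prop :=
  (m, w) ∈ (GSrun P).props

/-- `(m, w)` is a blocking pair for the matching `μ` (men to women) w.r.t. profile `P`. -/
def Blocks {n : ℕ} (P : Profile n) (μ : Fin n → Fin n) (m w : Fin n) : Prop :=
  P.mpref m w (μ m) ∧ ∃ m', μ m' = w ∧ P.wpref w m m'

/-- `μ` is a stable matching with respect to profile `P`. -/
def Stable {n : ℕ} (P : Profile n) (μ : Fin n → Fin n) : Prop :=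
  Function.Bijective μ ∧ ∀ m w, ¬ Blocks P μ m w

/-- Replace man `m`'s preference list by `e`. -/
def Profile.updateM {n : ℕ} (P : Profile n) (m : Fin n) (e : Fin n ≃ Fin n) : Profile n :=
  { P with M := Function.update P.M m e }

/-- Replace woman `w`'s preference list by `e`. -/
def Profile.updateW {n : ℕ} (P : Profile n) (w : Fin n) (e : Fin n ≃ Fin n) : Profile n :=
  { P with W := Function.update P.W w e }

/-- The set of women ranked strictly above `w₀` in the list `e`. -/
def Above {n : ℕ} (e : Fin n ≃ Fin n) (w₀ : Fin n) : Set (Fin n) :=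
  {w | e.symm w < e.symm w₀}

/-- The set of women ranked strictly below `w₀` in the list `e`. -/
def Below {n : ℕ} (e : Fin n ≃ Fin n) (w₀ : Fin n) : Set (Fin n) :=
  {w | e.symm w₀ < e.symm w}

/-- `e'` is obtained from man `m`'s true list by pushing up the set `X` and pushing
down the set `Y` around the pivot `DA P m` (the order of women above and below
the pivot is immaterial, cf. Proposition 2 of the paper). -/
def PushUpDown {n : ℕ} (P : Profile n) (m : Fin n) (X Y : Set (Fin n))
    (e' : Fin n ≃ Fin n) : Prop :=
  Above e' (DA P m) = (Above (P.M m) (DA P m) ∪ X) \ Y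

/-- `e'` is obtained from `m`'s true list by pushing up the set `X` above `DA P m`. -/
def PushUp {n : ℕ} (P : Profile n) (m : Fin n) (X : Set (Fin n))
    (e' : Fin n ≃ Fin n) : Prop :=
  PushUpDown P m X ∅ e'

/-- `e'` is obtained from `m`'s true list by pushing down the set `Y` below `DA P m`. -/
def PushDown {n : ℕ} (P : Profile n) (m : Fin n) (Y : Set (Fin n))
    (e' : Fin n ≃ Fin n) : Prop :=
  PushUpDown P m ∅ Y e'

/-- Woman `w` is ranked below `DA P m` in `m`'s true list, and pushing her up
individually leaves `m`'s deferred acceptance partner unchanged (no regret). -/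
def NoRegretWoman {n : ℕ} (P : Profile n) (m w : Fin n) : Prop :=
  w ∈ Below (P.M m) (DA P m) ∧
    ∀ e' : Fin n ≃ Fin n, PushUp P m {w} e' → DA (P.updateM m e') m = DA P m

/-- The no-regret set `W^NR` of accomplice `m`. -/
def WNR {n : ℕ} (P : Profile n) (m : Fin n) : Set (Fin n) :=
  {w | NoRegretWoman P m w}

/-!
Write `μ = DA P` and `μ' = DA P'` for `P'` the profile in which `m` reports `eY`. The engine is the
strategy-proofness of men-proposing deferred acceptance (Dubins–Freedman), derived from the
Gale–Sotomayor blocking lemma: if `ρ` is stable for a profile that differs from `P` only in `m`'s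
list, then `m` does not truly prefer `ρ m` to `μ m`. Applied to `P` and `μ'`, this rules out that
`m` truly prefers `μ' m` to `μ m`; applied to `P'` and `μ` (the true list now being the
misreport), it rules out that `eY` ranks `μ' m` below `μ m`. The remaining case is `μ' m = w ∈ Y`.
Let `P_w` be the profile in which `m` pushes up `w` alone; as `w ∈ W^NR`, `DA P_w m = μ m`. But
`μ'` is stable for the profile obtained from `P_w` by the misreport `eY`, and `P_w` ranks `w`
above `μ m`, contradicting strategy-proofness once more.
-/

section DeferredAcceptance
variable {n : ℕ}

def proposer (s : GSState n) : Option (Fin n) :=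
  (List.finRange n).find? (fun m => isUnmatched s m && decide (s.next m < n))

lemma proposer_eq_some {s : GSState n} {m : Fin n} (h : proposer s = some m) :
    (∀ w, s.wmatch w ≠ some m) ∧ s.next m < n := by
  simpa [isUnmatched] using List.find?_some h

lemma exhausted_of_proposer_eq_none {s : GSState n} (h : proposer s = none) {m : Fin n}
    (hm : ∀ w, s.wmatch w ≠ some m) : n ≤ s.next m := by
  have := List.find?_eq_none.mp h m (List.mem_finRange m)
  simp_all [isUnmatched]

lemma GSstep_of_proposer_eq_none (P : Profile n) {s : GSState n} (h : proposer s = none) :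
    GSstep P s = s := by
  unfold GSstep
  rw [show (List.finRange n).find? _ = none from h]

def Accepts (P : Profile n) (s : GSState n) (w m : Fin n) : Prop :=
  ∀ m', s.wmatch w = some m' → P.wpref w m m'

section Step

variable {P : Profile n} {s : GSState n} {m w : Fin n}

lemma GSstep_next (h : proposer s = some m) :
    (GSstep P s).next = Function.update s.next m (s.next m + 1) := by
  have hlt := (proposer_eq_some h).2
  unfold GSstep
  rw [show (List.finRange n).find? _ = some m from h]
  dsimp only
  rw [dif_pos hlt]
  split
  · rfl
  · split <;> rfl

lemma GSstep_wmatch_of_accepts (h : proposer s = some m)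
    (hw : ((P.M m).symm w : ℕ) = s.next m) (ha : Accepts P s w m) :
    (GSstep P s).wmatch = Function.update s.wmatch w (some m) := by
  have hlt := (proposer_eq_some h).2
  obtain rfl := (P.M m).symm_apply_eq.mp (Fin.ext (b := ⟨s.next m, hlt⟩) hw)
  dsimp only [Accepts, Profile.wpref] at ha
  unfold GSstep
  rw [show (List.finRange n).find? _ = some m from h]
  dsimp only
  rw [dif_pos hlt]
  split
  · rfl
  · next m' hm' => rw [if_pos (ha m' hm')]

lemma GSstep_wmatch_of_not_accepts (h : proposer s = some m)
    (hw : ((P.M m).symm w : ℕ) = s.next m) (ha : ¬ Accepts P s w m) :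
    (GSstep P s).wmatch = s.wmatch := by
  have hlt := (proposer_eq_some h).2
  obtain rfl := (P.M m).symm_apply_eq.mp (Fin.ext (b := ⟨s.next m, hlt⟩) hw)
  dsimp only [Accepts, Profile.wpref] at ha
  unfold GSstep
  rw [show (List.finRange n).find? _ = some m from h]
  dsimp only
  rw [dif_pos hlt]
  split
  · next hnone => exact absurd (fun m' hm' => by simp [hnone] at hm') ha
  · next m' hm' =>
    rw [if_neg]
    exact fun hpref => ha fun m'' hm'' => by rw [hm'] at hm''; cases hm''; exact hpref

lemma exists_rank_eq_next (P : Profile n) (h : proposer s = some m) :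
    ∃ w, ((P.M m).symm w : ℕ) = s.next m :=
  ⟨P.M m ⟨s.next m, (proposer_eq_some h).2⟩, by simp⟩

lemma next_le_GSstep_next (P : Profile n) (s : GSState n) (m' : Fin n) :
    s.next m' ≤ (GSstep P s).next m' := by
  rcases hs : proposer s with _ | m
  · rw [GSstep_of_proposer_eq_none P hs]
  · rw [GSstep_next hs]
    by_cases hm : m' = m
    · subst hm; simp
    · simp [hm]

lemma lt_GSstep_next (h : proposer s = some m) {m' : Fin n} {x : ℕ}
    (hx : x < (GSstep P s).next m') : x < s.next m' ∨ (m' = m ∧ x = s.next m) := by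
  rw [GSstep_next h] at hx
  by_cases hm : m' = m
  · subst hm; simp only [Function.update_self] at hx; omega
  · simp_all

def HoldsAtLeast (P : Profile n) (s : GSState n) (w m : Fin n) : Prop :=
  ∃ m', s.wmatch w = some m' ∧ (P.W w).symm m' ≤ (P.W w).symm m

lemma HoldsAtLeast.step {m₀ : Fin n} (hold : HoldsAtLeast P s w m₀) :
    HoldsAtLeast P (GSstep P s) w m₀ := by
  obtain ⟨m', hm', hle⟩ := hold
  rcases hs : proposer s with _ | m
  · rw [GSstep_of_proposer_eq_none P hs]; exact ⟨m', hm', hle⟩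
  obtain ⟨v, hv⟩ := exists_rank_eq_next P hs
  by_cases ha : Accepts P s v m
  · rw [HoldsAtLeast, GSstep_wmatch_of_accepts hs hv ha]
    by_cases hw : w = v
    · subst hw
      exact ⟨m, by simp, (ha m' hm').le.trans hle⟩
    · simpa [hw] using ⟨m', hm', hle⟩
  · rw [HoldsAtLeast, GSstep_wmatch_of_not_accepts hs hv ha]; exact ⟨m', hm', hle⟩

lemma GSstep_wmatch_eq_some (h : proposer s = some m) (hw : ((P.M m).symm w : ℕ) = s.next m)
    {w' m' : Fin n} (h' : (GSstep P s).wmatch w' = some m') :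
    s.wmatch w' = some m' ∨ (w' = w ∧ m' = m) := by
  by_cases ha : Accepts P s w m
  · rw [GSstep_wmatch_of_accepts h hw ha] at h'
    by_cases hw' : w' = w
    · subst hw'
      exact Or.inr ⟨rfl, by simpa [eq_comm] using h'⟩
    · exact Or.inl (by simpa [hw'] using h')
  · rw [GSstep_wmatch_of_not_accepts h hw ha] at h'
    exact Or.inl h'

lemma holdsAtLeast_GSstep_of_proposer_eq_some (h : proposer s = some m)
    (hw : ((P.M m).symm w : ℕ) = s.next m) : HoldsAtLeast P (GSstep P s) w m := by
  by_cases ha : Accepts P s w m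
  · exact ⟨m, by simp [GSstep_wmatch_of_accepts h hw ha], le_rfl⟩
  · rw [HoldsAtLeast, GSstep_wmatch_of_not_accepts h hw ha]
    obtain ⟨m', hm', hpref⟩ : ∃ m', s.wmatch w = some m' ∧ ¬ P.wpref w m m' := by
      simpa [Accepts] using ha
    exact ⟨m', hm', not_lt.mp hpref⟩

end Step

structure GSInvariant (P : Profile n) (s : GSState n) : Prop where
  next_le : ∀ m, s.next m ≤ n
  rank_lt_next : ∀ {w m}, s.wmatch w = some m → ((P.M m).symm w : ℕ) < s.next m
  eq_of_wmatch_eq : ∀ {w w' m}, s.wmatch w = some m → s.wmatch w' = some m → w = w'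
  holdsAtLeast : ∀ {m w}, ((P.M m).symm w : ℕ) < s.next m → HoldsAtLeast P s w m

lemma GSInvariant.init (P : Profile n) : GSInvariant P (GSinit n) where
  next_le _ := Nat.zero_le n
  rank_lt_next h := nomatch h
  eq_of_wmatch_eq h := nomatch h
  holdsAtLeast h := nomatch h

lemma GSInvariant.step {P : Profile n} {s : GSState n} (hs : GSInvariant P s) :
    GSInvariant P (GSstep P s) := by
  rcases hsel : proposer s with _ | m
  · rwa [GSstep_of_proposer_eq_none P hsel]
  obtain ⟨hun, hlt⟩ := proposer_eq_some hsel
  obtain ⟨w, hw⟩ := exists_rank_eq_next P hsel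
  refine ⟨fun m' => ?_, fun h' => ?_, fun h₁ h₂ => ?_, fun {m' w'} h' => ?_⟩
  · rw [GSstep_next hsel]
    by_cases hm : m' = m
    · subst hm; simpa using hlt
    · simpa [hm] using hs.next_le m'
  · rcases GSstep_wmatch_eq_some hsel hw h' with h' | ⟨rfl, rfl⟩
    · exact (hs.rank_lt_next h').trans_le (next_le_GSstep_next P s _)
    · simp [GSstep_next hsel, hw]
  · rcases GSstep_wmatch_eq_some hsel hw h₂ with h₂ | ⟨rfl, rfl⟩
    · rcases GSstep_wmatch_eq_some hsel hw h₁ with h₁ | ⟨-, rfl⟩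
      · exact hs.eq_of_wmatch_eq h₁ h₂
      · exact absurd h₂ (hun _)
    · rcases GSstep_wmatch_eq_some hsel hw h₁ with h₁ | ⟨rfl, -⟩
      · exact absurd h₁ (hun _)
      · rfl
  · rcases lt_GSstep_next hsel h' with h' | ⟨rfl, h'⟩
    · exact (hs.holdsAtLeast h').step
    · obtain rfl : w' = w := (P.M m').symm.injective (Fin.ext (h'.trans hw.symm))
      exact holdsAtLeast_GSstep_of_proposer_eq_some hsel hw

def GSiter (P : Profile n) (k : ℕ) : GSState n := (GSstep P)^[k] (GSinit n)

section Iter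

variable (P : Profile n)

lemma GSiter_succ (k : ℕ) : GSiter P (k + 1) = GSstep P (GSiter P k) :=
  Function.iterate_succ_apply' _ _ _

lemma gsInvariant_GSiter (k : ℕ) : GSInvariant P (GSiter P k) := by
  induction k with
  | zero => exact GSInvariant.init P
  | succ k ih => rw [GSiter_succ]; exact ih.step

lemma monotone_GSiter_next (m : Fin n) : Monotone fun k => (GSiter P k).next m :=
  monotone_nat_of_le_succ fun k => by
    simp only [GSiter_succ]; exact next_le_GSstep_next P _ m

variable {P}

lemma HoldsAtLeast.mono {k j : ℕ} {w m : Fin n} (h : HoldsAtLeast P (GSiter P k) w m)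
    (hkj : k ≤ j) : HoldsAtLeast P (GSiter P j) w m := by
  induction j, hkj using Nat.le_induction with
  | base => exact h
  | succ j _ ih => rw [GSiter_succ]; exact ih.step

/-- Having been proposed to by `m` without holding him, `w` holds someone she prefers, and her
holders only improve. -/
lemma GSiter_wmatch_ne_of_rank_lt_next {k j : ℕ} {w m : Fin n}
    (hrank : ((P.M m).symm w : ℕ) < (GSiter P k).next m) (hne : (GSiter P k).wmatch w ≠ some m)
    (hkj : k ≤ j) : (GSiter P j).wmatch w ≠ some m := by
  obtain ⟨m', hm', hle⟩ := (gsInvariant_GSiter P k).holdsAtLeast hrank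
  have hlt : (P.W w).symm m' < (P.W w).symm m :=
    hle.lt_of_ne fun h => hne (hm' ▸ congrArg some ((P.W w).symm.injective h))
  obtain ⟨m'', hm'', hle'⟩ := HoldsAtLeast.mono ⟨m', hm', le_rfl⟩ hkj
  rw [hm'']
  rintro ⟨⟩
  exact (hle'.trans_lt hlt).false

lemma GSiter_eq_of_proposer_eq_none {k j : ℕ} (h : proposer (GSiter P k) = none) (hkj : k ≤ j) :
    GSiter P j = GSiter P k := by
  induction j, hkj using Nat.le_induction with
  | base => rfl
  | succ j _ ih => rw [GSiter_succ, ih, GSstep_of_proposer_eq_none P h]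

lemma sum_GSiter_next {k : ℕ} (h : ∀ j < k, proposer (GSiter P j) ≠ none) :
    ∑ m, (GSiter P k).next m = k := by
  induction k with
  | zero => simp [GSiter, GSinit]
  | succ k ih =>
    obtain ⟨m, hm⟩ := Option.ne_none_iff_exists'.mp (h k k.lt_succ_self)
    have hk := ih fun j hj => h j (hj.trans k.lt_succ_self)
    rw [← Finset.add_sum_erase _ _ (Finset.mem_univ m)] at hk
    rw [GSiter_succ, GSstep_next hm, Finset.sum_update_of_mem (Finset.mem_univ m),
      Finset.sdiff_singleton_eq_erase]
    omega

/-- Each step raises `∑ m, next m ≤ n * n` by one, so the algorithm stops within `n * n` steps. -/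
lemma proposer_GSrun : proposer (GSrun P) = none := by
  by_contra hne
  have hall : ∀ j < n * n + 1, proposer (GSiter P j) ≠ none := fun j hj hj' =>
    hne (by rw [GSrun, ← GSiter, GSiter_eq_of_proposer_eq_none hj' hj.le]; exact hj')
  have hsum := sum_GSiter_next hall
  have hle : ∑ m, (GSiter P (n * n + 1)).next m ≤ ∑ _m : Fin n, n :=
    Finset.sum_le_sum fun m _ => (gsInvariant_GSiter P _).next_le m
  simp at hle
  omega

lemma GSiter_eq_GSrun {j : ℕ} (hj : n * n + 1 ≤ j) : GSiter P j = GSrun P :=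
  GSiter_eq_of_proposer_eq_none proposer_GSrun hj

lemma lt_of_proposer_GSiter_eq_some {k : ℕ} {m : Fin n} (h : proposer (GSiter P k) = some m) :
    k < n * n + 1 := by
  by_contra hk
  rw [GSiter_eq_GSrun (not_lt.mp hk), proposer_GSrun] at h
  cases h

end Iter

section DA

variable (P : Profile n)

lemma gsInvariant_GSrun : GSInvariant P (GSrun P) := gsInvariant_GSiter P _

/-- A woman left alone at the end was never proposed to, so every man is still held by someone;
the men then inject into the other women. -/
lemma exists_GSrun_wmatch_eq_some (w : Fin n) : ∃ m, (GSrun P).wmatch w = some m := by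
  by_contra! hw
  have hheld : ∀ m, ∃ w', (GSrun P).wmatch w' = some m := by
    intro m
    by_contra! hm
    have hrank : ((P.M m).symm w : ℕ) < (GSrun P).next m :=
      ((P.M m).symm w).isLt.trans_le (exhausted_of_proposer_eq_none proposer_GSrun hm)
    obtain ⟨m', hm', -⟩ := (gsInvariant_GSrun P).holdsAtLeast hrank
    exact hw m' hm'
  choose f hf using hheld
  have hinj : Function.Injective f := fun m₁ m₂ h =>
    Option.some.inj ((hf m₁).symm.trans (h ▸ hf m₂))
  obtain ⟨m, rfl⟩ := Finite.surjective_of_injective hinj w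
  exact hw m (hf m)

lemma GSrun_wmatch_DA (m : Fin n) : (GSrun P).wmatch (DA P m) = some m := by
  have hex : ∃ w, (GSrun P).wmatch w = some m := by
    choose f hf using exists_GSrun_wmatch_eq_some P
    have hinj : Function.Injective f := fun w₁ w₂ h =>
      (gsInvariant_GSrun P).eq_of_wmatch_eq (hf w₁) (h ▸ hf w₂)
    obtain ⟨w, hw⟩ := Finite.surjective_of_injective hinj m
    exact ⟨w, hw ▸ hf w⟩
  rw [DA, dif_pos hex]
  exact hex.choose_spec

variable {P}

lemma DA_eq_iff {m w : Fin n} : DA P m = w ↔ (GSrun P).wmatch w = some m :=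
  ⟨fun h => h ▸ GSrun_wmatch_DA P m,
    fun h => (gsInvariant_GSrun P).eq_of_wmatch_eq (GSrun_wmatch_DA P m) h⟩

variable (P)

lemma DA_bijective : Function.Bijective (DA P) :=
  ⟨fun m₁ m₂ h => Option.some.inj ((GSrun_wmatch_DA P m₁).symm.trans (h ▸ GSrun_wmatch_DA P m₂)),
    fun w => (exists_GSrun_wmatch_eq_some P w).imp fun _ => DA_eq_iff.mpr⟩

lemma rank_DA_lt_GSrun_next (m : Fin n) : ((P.M m).symm (DA P m) : ℕ) < (GSrun P).next m :=
  (gsInvariant_GSrun P).rank_lt_next (GSrun_wmatch_DA P m)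

lemma DA_stable : Stable P (DA P) := by
  refine ⟨DA_bijective P, ?_⟩
  rintro m w ⟨hmp, m', hm', hwp⟩
  have hrank : ((P.M m).symm w : ℕ) < (GSrun P).next m :=
    (Fin.lt_def.mp hmp).trans (rank_DA_lt_GSrun_next P m)
  obtain ⟨m₁, hm₁, hle⟩ := (gsInvariant_GSrun P).holdsAtLeast hrank
  obtain rfl : m₁ = m' := Option.some.inj (hm₁.symm.trans (DA_eq_iff.mp hm'))
  exact (hle.trans_lt hwp).false

lemma GSiter_next_le_rank_DA {k : ℕ} {m : Fin n} (h : (GSiter P k).wmatch (DA P m) ≠ some m) :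
    (GSiter P k).next m ≤ (P.M m).symm (DA P m) := by
  by_contra! hlt
  have := GSiter_wmatch_ne_of_rank_lt_next hlt h (le_max_left k (n * n + 1))
  rw [GSiter_eq_GSrun (le_max_right _ _)] at this
  exact this (GSrun_wmatch_DA P m)

end DA

def ProposesAt (P : Profile n) (k : ℕ) (m w : Fin n) : Prop :=
  proposer (GSiter P k) = some m ∧ ((P.M m).symm w : ℕ) = (GSiter P k).next m

section Proposals

variable {P : Profile n} {k : ℕ} {m w : Fin n}

lemma exists_proposesAt_of_rank_lt_next {j : ℕ} (h : ((P.M m).symm w : ℕ) < (GSiter P j).next m) :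
    ∃ k < j, ProposesAt P k m w := by
  induction j with
  | zero => exact absurd h (Nat.not_lt_zero _)
  | succ j ih =>
    rw [GSiter_succ] at h
    rcases hs : proposer (GSiter P j) with _ | m'
    · rw [GSstep_of_proposer_eq_none P hs] at h
      obtain ⟨k, hk, hp⟩ := ih h
      exact ⟨k, hk.trans j.lt_succ_self, hp⟩
    rcases lt_GSstep_next hs h with h' | ⟨rfl, h'⟩
    · obtain ⟨k, hk, hp⟩ := ih h'
      exact ⟨k, hk.trans j.lt_succ_self, hp⟩
    · exact ⟨j, j.lt_succ_self, hs, h'⟩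

lemma exists_proposesAt_of_rank_le_DA (h : (P.M m).symm w ≤ (P.M m).symm (DA P m)) :
    ∃ k, ProposesAt P k m w :=
  (exists_proposesAt_of_rank_lt_next (j := n * n + 1)
    ((Fin.le_def.mp h).trans_lt (rank_DA_lt_GSrun_next P m))).imp fun _ => And.right

lemma ProposesAt.lt_run (h : ProposesAt P k m w) : k < n * n + 1 :=
  lt_of_proposer_GSiter_eq_some h.1

lemma ProposesAt.rank_lt_next {j : ℕ} (h : ProposesAt P k m w) (hkj : k < j) :
    ((P.M m).symm w : ℕ) < (GSiter P j).next m := by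
  have hstep : (GSiter P (k + 1)).next m = (GSiter P k).next m + 1 := by
    rw [GSiter_succ, GSstep_next h.1, Function.update_self]
  have hmono : (GSiter P (k + 1)).next m ≤ (GSiter P j).next m := monotone_GSiter_next P m hkj
  have := h.2
  omega

end Proposals

section Blocking

variable (P : Profile n)

def Profile.betterOff (ρ μ : Fin n → Fin n) : Set (Fin n) :=
  {m | P.mpref m (ρ m) (μ m)}

variable {P} {ρ μ : Fin n → Fin n}

/-- The `μ`-partner of `w` is not better off under `ρ`, and `w` prefers him to her `ρ`-partner by
stability of `μ`. -/
lemma exists_blocks_of_mem_image_betterOff (hμ : Stable P μ) (hρ : Function.Injective ρ)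
    {w : Fin n} (hwρ : w ∈ ρ '' P.betterOff ρ μ) (hwμ : w ∉ μ '' P.betterOff ρ μ) :
    ∃ m₀ ∉ P.betterOff ρ μ, Blocks P ρ m₀ w := by
  obtain ⟨m₁, hm₁, rfl⟩ := hwρ
  obtain ⟨m₀, hm₀⟩ := hμ.1.2 (ρ m₁)
  have hm₀M : m₀ ∉ P.betterOff ρ μ := fun h => hwμ ⟨m₀, h, hm₀⟩
  have hm₀m₁ : m₀ ≠ m₁ := by rintro rfl; exact hm₀M hm₁
  refine ⟨m₀, hm₀M, ?_, m₁, rfl, ?_⟩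
  · have hne : (P.M m₀).symm (ρ m₁) ≠ (P.M m₀).symm (ρ m₀) := fun h =>
      hm₀m₁ (hρ ((P.M m₀).symm.injective h)).symm
    exact lt_of_le_of_ne (hm₀ ▸ not_lt.mp hm₀M) hne
  · have hne : (P.W (ρ m₁)).symm m₀ ≠ (P.W (ρ m₁)).symm m₁ := fun h =>
      hm₀m₁ ((P.W (ρ m₁)).symm.injective h)
    exact lt_of_le_of_ne (not_lt.mp fun hlt => hμ.2 m₁ (ρ m₁) ⟨hm₁, m₀, hm₀, hlt⟩) hne

open Classical in
/-- Let `k₀` be the last step at which a man of `betterOff` proposes to his final partner `w`.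
As the `ρ`-partner of another such man, `w` already holds someone at `k₀`; that man, now rejected
for good, blocks `ρ` together with `w`. -/
lemma exists_blocks_of_image_DA_subset
    (hsub : DA P '' P.betterOff ρ (DA P) ⊆ ρ '' P.betterOff ρ (DA P))
    (hne : (P.betterOff ρ (DA P)).Nonempty) :
    ∃ m₀ ∉ P.betterOff ρ (DA P), ∃ w, Blocks P ρ m₀ w := by
  set M' := P.betterOff ρ (DA P)
  have hprop : ∀ m' ∈ M', ∃ k, ProposesAt P k m' (DA P m') := fun _ _ =>
    exists_proposesAt_of_rank_le_DA le_rfl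
  let Last k := ∃ m' ∈ M', ProposesAt P k m' (DA P m')
  obtain ⟨ma, hma⟩ := hne
  obtain ⟨ka, hka⟩ := hprop ma hma
  set k₀ := Nat.findGreatest Last (n * n + 1)
  have hmax : ∀ m' ∈ M', ∀ k, ProposesAt P k m' (DA P m') → k ≤ k₀ := fun m' hm' _ hk =>
    Nat.le_findGreatest hk.lt_run.le ⟨m', hm', hk⟩
  obtain ⟨m₁, hm₁, hp₁⟩ : Last k₀ := Nat.findGreatest_spec hka.lt_run.le ⟨ma, hma, hka⟩
  obtain ⟨m₃, hm₃, hρm₃⟩ := hsub ⟨m₁, hm₁, rfl⟩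
  obtain ⟨k₃, hp₃⟩ := hprop m₃ hm₃
  have hrank₃ : ((P.M m₃).symm (DA P m₁) : ℕ) < (GSiter P k₀).next m₃ := by
    rw [← hρm₃]
    exact (Fin.lt_def.mp hm₃).trans_le
      (hp₃.2.trans_le (monotone_GSiter_next P m₃ (hmax m₃ hm₃ k₃ hp₃)))
  obtain ⟨m₀, hm₀, hle⟩ := (gsInvariant_GSiter P k₀).holdsAtLeast hrank₃
  have hm₀m₁ : m₀ ≠ m₁ := by rintro rfl; exact (proposer_eq_some hp₁.1).1 _ hm₀
  have hnext₀ : (GSiter P k₀).next m₀ ≤ (P.M m₀).symm (DA P m₀) :=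
    GSiter_next_le_rank_DA P fun h =>
      hm₀m₁ ((DA_bijective P).1 ((gsInvariant_GSiter P k₀).eq_of_wmatch_eq h hm₀))
  have hm₀M : m₀ ∉ M' := by
    intro h
    obtain ⟨k₂, hp₂⟩ := hprop m₀ h
    have hk₂ : k₂ < k₀ := (hmax m₀ h k₂ hp₂).lt_of_ne fun e =>
      hm₀m₁ (Option.some.inj (hp₂.1.symm.trans (e ▸ hp₁.1)))
    exact (hp₂.rank_lt_next hk₂).not_ge hnext₀
  refine ⟨m₀, hm₀M, DA P m₁, ?_, m₃, hρm₃, ?_⟩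
  · exact Fin.lt_def.mpr (((gsInvariant_GSiter P k₀).rank_lt_next hm₀).trans_le
      (hnext₀.trans (Fin.le_def.mp (not_lt.mp hm₀M))))
  · exact hle.lt_of_ne fun h => hm₀M ((P.W _).symm.injective h ▸ hm₃)

/-- Gale–Sotomayor blocking lemma. -/
theorem exists_blocks_of_betterOff_nonempty (hρ : Function.Injective ρ)
    (hne : (P.betterOff ρ (DA P)).Nonempty) :
    ∃ m₀ ∉ P.betterOff ρ (DA P), ∃ w, Blocks P ρ m₀ w := by
  by_cases hsub : ρ '' P.betterOff ρ (DA P) ⊆ DA P '' P.betterOff ρ (DA P)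
  · refine exists_blocks_of_image_DA_subset (Set.eq_of_subset_of_ncard_le hsub ?_).symm.subset hne
    rw [Set.ncard_image_of_injective _ hρ, Set.ncard_image_of_injective _ (DA_bijective P).1]
  · obtain ⟨w, hwρ, hwμ⟩ := Set.not_subset.mp hsub
    obtain ⟨m₀, hm₀, hb⟩ := exists_blocks_of_mem_image_betterOff (DA_stable P) hρ hwρ hwμ
    exact ⟨m₀, hm₀, w, hb⟩

end Blocking

section Manipulation

variable {P : Profile n} {m : Fin n}

@[simp]
lemma Profile.updateM_M_self (P : Profile n) (m : Fin n) (e : Fin n ≃ Fin n) :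
    (P.updateM m e).M m = e := by
  simp [Profile.updateM]

@[simp]
lemma Profile.updateM_updateM (P : Profile n) (m : Fin n) (e e' : Fin n ≃ Fin n) :
    (P.updateM m e).updateM m e' = P.updateM m e' := by
  simp [Profile.updateM]

@[simp]
lemma Profile.updateM_eq_self (P : Profile n) (m : Fin n) : P.updateM m (P.M m) = P := by
  simp [Profile.updateM]

lemma blocks_updateM_iff {m₀ w : Fin n} (e : Fin n ≃ Fin n) (ρ : Fin n → Fin n) (h : m₀ ≠ m) :
    Blocks (P.updateM m e) ρ m₀ w ↔ Blocks P ρ m₀ w := by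
  simp [Blocks, Profile.mpref, Profile.wpref, Profile.updateM, Function.update_of_ne h]

/-- Dubins–Freedman: men-proposing deferred acceptance is strategy-proof for the men. -/
theorem not_mpref_of_stable_updateM {e : Fin n ≃ Fin n} {ρ : Fin n → Fin n}
    (hρ : Stable (P.updateM m e) ρ) : ¬ P.mpref m (ρ m) (DA P m) := by
  intro hm
  obtain ⟨m₀, hm₀, w, hb⟩ := exists_blocks_of_betterOff_nonempty hρ.1.1 ⟨m, hm⟩
  have hm₀m : m₀ ≠ m := by rintro rfl; exact hm₀ hm
  exact hρ.2 m₀ w ((blocks_updateM_iff e ρ hm₀m).mpr hb)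

lemma exists_equiv_symm_lt_iff {α : Type*} [LinearOrder α] {f : Fin n → α}
    (hf : Function.Injective f) : ∃ e : Fin n ≃ Fin n, ∀ x y, e.symm x < e.symm y ↔ f x < f y := by
  have hmono : StrictMono (f ∘ Tuple.sort f) :=
    (Tuple.monotone_sort f).strictMono_of_injective (hf.comp (Tuple.sort f).injective)
  refine ⟨Tuple.sort f, fun x y => ?_⟩
  simpa using (hmono.lt_iff_lt (a := (Tuple.sort f).symm x) (b := (Tuple.sort f).symm y)).symm

/-- Rank the women of `X` first, then the others, each block in the order of `P.M m`. -/
lemma exists_pushUp (P : Profile n) (m : Fin n) {X : Set (Fin n)} (hX : DA P m ∉ X) :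
    ∃ e, PushUp P m X e := by
  classical
  let key : Fin n → ℕ := fun w => if w ∈ X then (P.M m).symm w else (P.M m).symm w + n
  have hkey : Function.Injective key := by
    intro w₁ w₂ h
    have h₁ := ((P.M m).symm w₁).isLt
    have h₂ := ((P.M m).symm w₂).isLt
    refine (P.M m).symm.injective (Fin.ext ?_)
    by_cases hw₁ : w₁ ∈ X <;> by_cases hw₂ : w₂ ∈ X <;> simp only [key, hw₁, hw₂, if_true,
      if_false] at h <;> omega
  obtain ⟨e, he⟩ := exists_equiv_symm_lt_iff hkey
  refine ⟨e, Set.ext fun w => ?_⟩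
  have hlt := ((P.M m).symm w).isLt
  simp only [Above, Set.sdiff_empty, Set.mem_union, Set.mem_ofPred_eq, he, key, hX, if_false,
    Fin.lt_def]
  split_ifs <;> simp_all
  omega

end Manipulation

end DeferredAcceptance

/-- Pushing up any subset `Y` of the no-regret set `W^NR`
simultaneously causes no regret for `m`. -/
theorem pushUp_subset_WNR_noRegret (n : ℕ) (P : Profile n) (m : Fin n)
    (Y : Set (Fin n)) (hY : Y ⊆ WNR P m)
    (eY : Fin n ≃ Fin n) (hpu : PushUp P m Y eY) :
    DA (P.updateM m eY) m = DA P m := by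
  set w := DA (P.updateM m eY) m
  have hAbove : Above eY (DA P m) = Above (P.M m) (DA P m) ∪ Y := by
    simpa [PushUp, PushUpDown] using hpu
  rcases lt_trichotomy (eY.symm w) (eY.symm (DA P m)) with hlt | heq | hgt
  · exfalso
    rcases (hAbove ▸ hlt : w ∈ Above (P.M m) (DA P m) ∪ Y) with htrue | hwY
    · exact not_mpref_of_stable_updateM (DA_stable _) htrue
    · -- pushed up alone, `w` leaves `m` with `DA P m`; reporting `eY` instead would then pay off
      obtain ⟨hbelow, hnr⟩ := hY hwY
      obtain ⟨e, he⟩ := exists_pushUp P m (X := {w}) fun h =>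
        (show (P.M m).symm (DA P m) < (P.M m).symm w from hbelow).ne (congrArg _ h)
      have hwe : w ∈ Above e (DA P m) := by rw [he]; simp
      refine not_mpref_of_stable_updateM (P := P.updateM m e) (m := m) (e := eY)
        (ρ := DA (P.updateM m eY)) (by simpa using DA_stable (P.updateM m eY)) ?_
      rw [Profile.mpref, Profile.updateM_M_self, hnr e he]
      exact hwe
  · exact eY.symm.injective heq
  · refine absurd ?_ (not_mpref_of_stable_updateM (P := P.updateM m eY) (m := m) (e := P.M m)
      (ρ := DA P) (by simpa using DA_stable P))
    simpa [Profile.mpref] using hgt
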